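/- For the kernel K_n(t̂) defined piecewise as 1 + K_n²(t̂) for 0 ≤ t̂ ≤ 1 and K_n¹(t̂) + K_n²(t̂) for 1 < t̂ < 1/sin θ, the one-sided limits at t̂ = 1 satisfy |K_n(1⁻) − K_n(1⁺)| = 1/cos θ − 1, i.e., the jump discontinuity of K_n at t̂ = 1 has size 1/cos θ − 1. -/

import Mathlib

set_option autoImplicit false
set_option maxHeartbeats 1000000

open Real Set Filter Topology

theorem K0_jump_at_one
    (θ : ℝ) (hθ : θ ∈ Set.Ioo 0 (π / 2))
    (ψ ψbar : ℝ → ℝ)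
    (hψ : ∀ t, ψ t = Real.arcsin (t * Real.sin θ) + θ)
    (hψbar : ∀ t, ψbar t = θ - Real.arcsin (t * Real.sin θ))
    (K1 K2 K : ℝ → ℝ)
    (hK1 : ∀ t, K1 t =
      -((1 - t * Real.cos (ψbar t) +
          t ^ 2 * Real.sin (ψbar t) * Real.sin θ / Real.sqrt (1 - t ^ 2 * Real.sin θ ^ 2)) /
        Real.sqrt (1 + t ^ 2 - 2 * t * Real.cos (ψbar t))))
    (hK2 : ∀ t, K2 t =
      (1 + t * Real.cos (ψ t) +
        t ^ 2 * Real.sin (ψ t) * Real.sin θ / Real.sqrt (1 - t ^ 2 * Real.sin θ ^ 2)) /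
        Real.sqrt (1 + t ^ 2 + 2 * t * Real.cos (ψ t)))
    (hKle : ∀ t ≤ (1 : ℝ), K t = 1 + K2 t)
    (hKgt : ∀ t > (1 : ℝ), K t = K1 t + K2 t) :
    ∃ Lm Lp : ℝ,
      Filter.Tendsto K (nhdsWithin 1 (Set.Iio 1)) (nhds Lm) ∧
      Filter.Tendsto K (nhdsWithin 1 (Set.Ioi 1)) (nhds Lp) ∧
      |Lm - Lp| = 1 / Real.cos θ - 1 := by
  obtain ⟨hθ0, hθ2⟩ := hθ
  set s := Real.sin θ with hsdef
  set c := Real.cos θ with hcdef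
  have hpi : (0:ℝ) < π := Real.pi_pos
  have hs0 : 0 < s := Real.sin_pos_of_pos_of_lt_pi hθ0 (by linarith)
  have hc0 : 0 < c := Real.cos_pos_of_mem_Ioo ⟨by linarith, hθ2⟩
  have hsc : s ^ 2 + c ^ 2 = 1 := Real.sin_sq_add_cos_sq θ
  have hs1 : s < 1 := by nlinarith
  have hc1 : c < 1 := by nlinarith
  -- key simplification of K2
  have key2 : ∀ t ∈ Ioo (0:ℝ) (1/s), K2 t = 1 / Real.sqrt (1 - t^2*s^2) := by
    rintro t ⟨ht0, ht1⟩
    have hts1 : t * s < 1 := (lt_div_iff₀ hs0).mp ht1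
    have hts0 : 0 < t * s := mul_pos ht0 hs0
    have hw2 : Real.sqrt (1 - t^2*s^2) ^ 2 = 1 - t^2*s^2 := Real.sq_sqrt (by nlinarith)
    have hw0 : 0 < Real.sqrt (1 - t^2*s^2) := Real.sqrt_pos.mpr (by nlinarith)
    set w := Real.sqrt (1 - t^2*s^2) with hwdef
    have hcos : Real.cos (ψ t) = c*w - t*s*s := by
      rw [hψ, Real.cos_add, Real.cos_arcsin,
        Real.sin_arcsin (by nlinarith) hts1.le,
        show 1 - (t*s)^2 = 1 - t^2*s^2 by ring, ← hwdef, ← hcdef, ← hsdef]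
      ring
    have hsin : Real.sin (ψ t) = t*s*c + s*w := by
      rw [hψ, Real.sin_add, Real.cos_arcsin,
        Real.sin_arcsin (by nlinarith) hts1.le,
        show 1 - (t*s)^2 = 1 - t^2*s^2 by ring, ← hwdef, ← hcdef, ← hsdef]
      ring
    have hden : Real.sqrt (1 + t^2 + 2*t*Real.cos (ψ t)) = t*c + w := by
      rw [hcos, show 1 + t^2 + 2*t*(c*w - t*s*s) = (t*c+w)^2 by nlinarith [hw2, hsc]]
      exact Real.sqrt_sq (by positivity)
    rw [hK2 t, hden, hcos, hsin, ← hwdef]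
    have hd0 : t*c + w ≠ 0 := by positivity
    field_simp
    linear_combination t*c*hw2
  have key1 : ∀ t ∈ Ioo (1:ℝ) (1/s), K1 t = 1 / Real.sqrt (1 - t^2*s^2) := by
    rintro t ⟨ht0, ht1⟩
    have hts1 : t * s < 1 := (lt_div_iff₀ hs0).mp ht1
    have hts0 : 0 < t * s := mul_pos (by linarith) hs0
    have hw2 : Real.sqrt (1 - t^2*s^2) ^ 2 = 1 - t^2*s^2 := Real.sq_sqrt (by nlinarith)
    have hw0 : 0 < Real.sqrt (1 - t^2*s^2) := Real.sqrt_pos.mpr (by nlinarith)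
    set w := Real.sqrt (1 - t^2*s^2) with hwdef
    have hwtc : w < t*c := by
      have h1 : (1 - t^2*s^2) < (t*c)^2 := by nlinarith
      calc w < Real.sqrt ((t*c)^2) := Real.sqrt_lt_sqrt (by nlinarith) h1
        _ = t*c := Real.sqrt_sq (by positivity)
    have hcos : Real.cos (ψbar t) = c*w + t*s*s := by
      rw [hψbar, Real.cos_sub, Real.cos_arcsin,
        Real.sin_arcsin (by nlinarith) hts1.le,
        show 1 - (t*s)^2 = 1 - t^2*s^2 by ring, ← hwdef, ← hcdef, ← hsdef]
      ring
    have hsin : Real.sin (ψbar t) = s*w - t*s*c := by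
      rw [hψbar, Real.sin_sub, Real.cos_arcsin,
        Real.sin_arcsin (by nlinarith) hts1.le,
        show 1 - (t*s)^2 = 1 - t^2*s^2 by ring, ← hwdef, ← hcdef, ← hsdef]
      ring
    have hden : Real.sqrt (1 + t^2 - 2*t*Real.cos (ψbar t)) = t*c - w := by
      rw [hcos, show 1 + t^2 - 2*t*(c*w + t*s*s) = (t*c-w)^2 by nlinarith [hw2, hsc]]
      exact Real.sqrt_sq (by linarith)
    rw [hK1 t, hden, hcos, hsin, ← hwdef]
    have hd0 : t*c - w ≠ 0 := by linarith
    field_simp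
    linear_combination t*c*hw2
  -- continuity of the model function
  have hval : Real.sqrt (1 - (1:ℝ)^2*s^2) = c := by
    rw [show 1 - (1:ℝ)^2*s^2 = c^2 by nlinarith]
    exact Real.sqrt_sq hc0.le
  have hcont : ContinuousAt (fun t : ℝ => Real.sqrt (1 - t^2*s^2)) 1 := by fun_prop
  have hg : Tendsto (fun t : ℝ => Real.sqrt (1 - t^2*s^2)) (𝓝 1) (𝓝 c) := by
    have := hcont.tendsto
    rwa [hval] at this
  have hmem : Ioo (0:ℝ) (1/s) ∈ 𝓝 (1:ℝ) :=
    Ioo_mem_nhds (by norm_num) (by rw [lt_div_iff₀ hs0]; linarith)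
  refine ⟨1 + 1/c, 2/c, ?_, ?_, ?_⟩
  · have hev : ∀ᶠ t in 𝓝[<] (1:ℝ), K t = 1 + 1 / Real.sqrt (1 - t^2*s^2) := by
      filter_upwards [nhdsWithin_le_nhds hmem, self_mem_nhdsWithin] with t ht hlt
      rw [hKle t (le_of_lt hlt), key2 t ht]
    have hev' : K =ᶠ[𝓝[<] (1:ℝ)] (fun t => 1 + 1 / Real.sqrt (1 - t^2*s^2)) := hev
    refine Tendsto.congr' hev'.symm ?_
    exact (tendsto_const_nhds.add (tendsto_const_nhds.div hg hc0.ne')).mono_left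
      nhdsWithin_le_nhds
  · have hev : ∀ᶠ t in 𝓝[>] (1:ℝ), K t = 2 / Real.sqrt (1 - t^2*s^2) := by
      filter_upwards [nhdsWithin_le_nhds hmem, self_mem_nhdsWithin] with t ht hlt
      have : K t = K1 t + K2 t := hKgt t hlt
      rw [this, key1 t ⟨hlt, ht.2⟩, key2 t ⟨by linarith [ht.1], ht.2⟩]
      ring
    have hev' : K =ᶠ[𝓝[>] (1:ℝ)] (fun t => 2 / Real.sqrt (1 - t^2*s^2)) := hev
    refine Tendsto.congr' hev'.symm ?_
    exact (tendsto_const_nhds.div hg hc0.ne').mono_left nhdsWithin_le_nhds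
  · have h1c : 1 < 1/c := by rw [lt_div_iff₀ hc0]; linarith
    rw [show 1 + 1/c - 2/c = -(1/c - 1) by ring, abs_neg, abs_of_nonneg (by linarith)]
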